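/- arXiv:2009.12746 — 2 statements merged into one kernel-verified Lean document; each statement's English description precedes it below -/
import Mathlib

section
/- Let N be a normal subgroup of the affine group G ⋉ V (with G connected and R irreducible) such that N ∩ ({e} × V) is trivial and the image L(N) under the linear projection is nontrivial. Then a contradiction arises; i.e., any nontrivial normal subgroup N of G ⋉ V must contain a nonzero pure translation (e, X) with X ≠ 0. -/
/-- Let `N` be a normal subgroup of the affine group
`G ⋉ V = Multiplicative V ⋊[φ] G` (with `R : G → GL(V)` faithful and irreducible, `dim V > 1`)
such that `N ∩ ({e} × V)` is trivial and the image `L(N)` under the linear projection is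
nontrivial.  Then a contradiction arises; i.e., any nontrivial normal subgroup `N` of `G ⋉ V`
must contain a nonzero pure translation `(e, X)` with `X ≠ 0`. -/
theorem stmt_9 {G V : Type*} [Group G] [AddCommGroup V] [Module ℝ V] [FiniteDimensional ℝ V]
    (hdim : 1 < Module.finrank ℝ V)
    (R : G →* (V →ₗ[ℝ] V)ˣ) (hfaith : Function.Injective R)
    (hirr : ∀ W : Submodule ℝ V, (∀ g : G, ∀ x ∈ W, (R g).val x ∈ W) → W = ⊥ ∨ W = ⊤)
    (φ : G →* MulAut (Multiplicative V))
    (hφ : ∀ (g : G) (v : V), φ g (Multiplicative.ofAdd v) = Multiplicative.ofAdd ((R g).val v))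
    (N : Subgroup (Multiplicative V ⋊[φ] G)) (hN : N.Normal) (hNnontriv : N ≠ ⊥) :
    ∃ X : V, X ≠ 0 ∧
      (SemidirectProduct.inl (Multiplicative.ofAdd X) : Multiplicative V ⋊[φ] G) ∈ N := by
  -- pick a nontrivial element of N
  obtain ⟨n, hn, hn1⟩ : ∃ n ∈ N, n ≠ 1 := by
    by_contra h
    push_neg at h
    exact hNnontriv (Subgroup.eq_bot_iff_forall N |>.mpr h)
  set g := n.right with hg
  set v := Multiplicative.toAdd n.left with hv
  have hnrep : n = ⟨Multiplicative.ofAdd v, g⟩ := by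
    cases n; rfl
  by_cases hgone : g = 1
  · refine ⟨v, ?_, ?_⟩
    · intro hv0
      apply hn1
      rw [hnrep, hv0, hgone]
      rfl
    · have : (SemidirectProduct.inl (Multiplicative.ofAdd v) :
          Multiplicative V ⋊[φ] G) = n := by
        rw [hnrep, hgone]; rfl
      rwa [this]
  · -- g ≠ 1, so R g moves some vector w
    have hRg : R g ≠ 1 := fun h => hgone (hfaith (h.trans (map_one R).symm))
    have : ∃ w : V, (R g).val w ≠ w := by
      by_contra h
      push_neg at h
      apply hRg
      ext x
      simpa using h x
    obtain ⟨w, hw⟩ := this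
    refine ⟨w - (R g).val w, sub_ne_zero.mpr (Ne.symm hw), ?_⟩
    set t : Multiplicative V ⋊[φ] G := SemidirectProduct.inl (Multiplicative.ofAdd w)
    have key : (SemidirectProduct.inl (Multiplicative.ofAdd (w - (R g).val w)) :
        Multiplicative V ⋊[φ] G) = t * n * t⁻¹ * n⁻¹ := by
      have hRinv : ∀ x : V, (R g).val ((R g⁻¹).val x) = x := by
        intro x
        have : (R g) * (R g⁻¹) = 1 := by rw [← map_mul, mul_inv_cancel, map_one]
        calc (R g).val ((R g⁻¹).val x) = ((R g) * (R g⁻¹)).val x := rfl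
          _ = x := by rw [this]; rfl
      ext
      · show Multiplicative.ofAdd (w - (R g).val w)
          = (t * n * t⁻¹ * n⁻¹).left
        rw [hnrep]
        simp only [SemidirectProduct.mul_left, SemidirectProduct.inv_left,
          SemidirectProduct.mul_right, SemidirectProduct.inv_right, t,
          SemidirectProduct.left_inl, SemidirectProduct.right_inl, map_one]
        simp only [MulAut.one_apply, ← ofAdd_neg, hφ, map_neg, hRinv, ← ofAdd_add]
        congr 1
        simp only [one_mul, inv_one, mul_one, map_one, Units.val_one,
          Module.End.one_apply, hRinv]
        abel
      · show (1 : G) = (t * n * t⁻¹ * n⁻¹).right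
        simp [t, hnrep]
    rw [key]
    exact N.mul_mem (hN.conj_mem n hn t) (N.inv_mem hn)
end

section
/- Let T be a diagonalizable automorphism of a finite-dimensional complex vector space V with V^0 ⊆ ker(I - T) where V^0 is a fixed distinguished subspace of dimension d, and let P(x) = charpoly(I - T)(x)/x^d. If V^0 ≠ ker(I - T), then P(I - T) = 0 and P(0) = 0; if V^0 = ker(I - T), then P(I - T)X = P(0)·π_0(X) for all X ∈ V, where π_0 is the projection onto V^0 with respect to the T-invariant decomposition V = V^0 ⊕ V^{≠0}. -/
/-!
With `S = 1 - T`, the decomposition `V = V⁰ ⊕ V^{≠0}` writes `S` as `0 ⊕ S'`, so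
`charpoly S = X ^ d * charpoly S'` and `P = charpoly S'`. By Cayley–Hamilton `P(S)` kills
`V^{≠0}`, while on `V⁰ ⊆ ker S` it acts as the scalar `P(0)`; hence `P(S) = P(0) • π₀`.
If `ker S ≠ V⁰`, the modular law makes `ker S` meet `V^{≠0}` nontrivially, so `0` is an
eigenvalue of `S'` and `P(0) = 0`.
-/

open Polynomial Module

namespace Module.End

theorem aeval_restrict_apply {R M : Type*} [CommSemiring R] [AddCommMonoid M] [Module R M]
    {f : End R M} {W : Submodule R M} (hW : ∀ x ∈ W, f x ∈ W) (p : R[X]) (x : W) :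
    (aeval (f.restrict hW) p x : M) = aeval f p (x : M) := by
  induction p using Polynomial.induction_on' with
  | add p q hp hq => simp [hp, hq]
  | monomial n a => simp [aeval_monomial, Module.algebraMap_end_apply, pow_restrict n hW]

variable {K V : Type*} [Field K] [AddCommGroup V] [Module K V] [FiniteDimensional K V]
  {f : End K V} {V₀ W : Submodule K V}

theorem aeval_charpoly_restrict_apply_of_mem (hW : ∀ x ∈ W, f x ∈ W) {x : V} (hx : x ∈ W) :
    aeval f (f.restrict hW).charpoly x = 0 := by
  rw [← aeval_restrict_apply hW _ ⟨x, hx⟩, LinearMap.aeval_self_charpoly]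
  rfl

theorem charpoly_eq_mul_charpoly_restrict_of_isCompl (hcompl : IsCompl V₀ W)
    (hV₀ : ∀ x ∈ V₀, f x ∈ V₀) (hW : ∀ x ∈ W, f x ∈ W) :
    f.charpoly = (f.restrict hV₀).charpoly * (f.restrict hW).charpoly := by
  let e := Submodule.prodEquivOfIsCompl V₀ W hcompl
  have hconj : e.symm.conj f = (f.restrict hV₀).prodMap (f.restrict hW) := by
    refine LinearMap.ext fun p => ?_
    rw [LinearEquiv.conj_apply_apply, LinearEquiv.symm_symm, LinearEquiv.symm_apply_eq]
    simp [e, Submodule.coe_prodEquivOfIsCompl']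
  rw [← e.symm.charpoly_conj f, hconj, LinearMap.charpoly_prodMap]

theorem charpoly_eq_X_pow_mul_charpoly_restrict (hcompl : IsCompl V₀ W)
    (hV₀ : ∀ x ∈ V₀, f x = 0) (hW : ∀ x ∈ W, f x ∈ W) :
    f.charpoly = X ^ finrank K V₀ * (f.restrict hW).charpoly := by
  have hV₀' : ∀ x ∈ V₀, f x ∈ V₀ := fun x hx => (hV₀ x hx).symm ▸ V₀.zero_mem
  have hzero : f.restrict hV₀' = 0 := LinearMap.ext fun x => Subtype.ext (hV₀ x x.2)
  rw [charpoly_eq_mul_charpoly_restrict_of_isCompl hcompl hV₀' hW, hzero,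
    LinearMap.charpoly_zero]

theorem aeval_charpoly_restrict_apply (hcompl : IsCompl V₀ W)
    (hV₀ : ∀ x ∈ V₀, f x = 0) (hW : ∀ x ∈ W, f x ∈ W) {π : V →ₗ[K] V}
    (hπV₀ : ∀ x ∈ V₀, π x = x) (hπW : ∀ x ∈ W, π x = 0) (v : V) :
    aeval f (f.restrict hW).charpoly v = (f.restrict hW).charpoly.eval 0 • π v := by
  obtain ⟨x, hx, y, hy, rfl⟩ :=
    Submodule.mem_sup.mp (hcompl.sup_eq_top ▸ Submodule.mem_top : v ∈ V₀ ⊔ W)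
  rw [map_add, map_add, aeval_apply_of_mem_apply_eq_smul (by rw [zero_smul, hV₀ x hx]),
    aeval_charpoly_restrict_apply_of_mem hW hy, hπV₀ x hx, hπW y hy, add_zero, add_zero]

theorem charpoly_restrict_eval_zero_of_ne_ker (hcompl : IsCompl V₀ W)
    (hV₀ : ∀ x ∈ V₀, f x = 0) (hW : ∀ x ∈ W, f x ∈ W) (hne : V₀ ≠ LinearMap.ker f) :
    (f.restrict hW).charpoly.eval 0 = 0 := by
  have hker : W ⊓ LinearMap.ker f ≠ ⊥ := by
    contrapose! hne
    rw [← top_inf_eq (LinearMap.ker f), ← hcompl.sup_eq_top,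
      sup_inf_assoc_of_le W (fun x hx => hV₀ x hx), hne, sup_bot_eq]
  obtain ⟨x, ⟨hxW, hxker⟩, hx0⟩ := Submodule.ne_bot_iff _ |>.mp hker
  have hx : HasEigenvector (f.restrict hW) 0 ⟨x, hxW⟩ :=
    ⟨mem_eigenspace_iff.mpr (Subtype.ext (by simpa using hxker)), by simpa using hx0⟩
  exact (hasEigenvalue_iff_isRoot_charpoly _ _).mp (hasEigenvalue_of_hasEigenvector hx)

end Module.End

open Module.End in
theorem stmt_15_general {V : Type*} [AddCommGroup V] [Module ℂ V] [FiniteDimensional ℂ V]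
    (T : Module.End ℂ V)
    (V0 Vne : Submodule ℂ V) (hcompl : IsCompl V0 Vne)
    (π0 : V →ₗ[ℂ] V) (hπ1 : ∀ v ∈ V0, π0 v = v) (hπ2 : ∀ v ∈ Vne, π0 v = 0)
    (hfix : ∀ v ∈ V0, T v = v) (hpres : ∀ v ∈ Vne, T v ∈ Vne)
    (d : ℕ) (hd : d = Module.finrank ℂ V0)
    (P : Polynomial ℂ) (hP : P = LinearMap.charpoly (1 - T) /ₘ Polynomial.X ^ d) :
    (V0 ≠ LinearMap.ker (1 - T) → Polynomial.aeval (1 - T) P = 0 ∧ P.eval 0 = 0) ∧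
      (V0 = LinearMap.ker (1 - T) →
        ∀ X : V, (Polynomial.aeval (1 - T) P) X = P.eval 0 • π0 X) := by
  have hV0 : ∀ v ∈ V0, (1 - T) v = 0 := fun v hv => by simp [hfix v hv]
  have hVne : ∀ v ∈ Vne, (1 - T) v ∈ Vne := fun v hv => Vne.sub_mem hv (hpres v hv)
  have hPS : P = ((1 - T).restrict hVne).charpoly := by
    rw [hP, hd, charpoly_eq_X_pow_mul_charpoly_restrict hcompl hV0 hVne,
      mul_divByMonic_cancel_left _ (monic_X_pow _)]
  have hPπ : ∀ X : V, aeval (1 - T) P X = P.eval 0 • π0 X := by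
    rw [hPS]
    exact aeval_charpoly_restrict_apply hcompl hV0 hVne hπ1 hπ2
  refine ⟨fun hne => ?_, fun _ => hPπ⟩
  have hP0 : P.eval 0 = 0 := hPS ▸ charpoly_restrict_eval_zero_of_ne_ker hcompl hV0 hVne hne
  exact ⟨LinearMap.ext fun X => by rw [hPπ, hP0, zero_smul, LinearMap.zero_apply], hP0⟩

/-- Let `T` be a diagonalizable automorphism of a finite-dimensional complex
vector space `V` preserving a decomposition `V = V⁰ ⊕ V^{≠0}` and fixing `V⁰` pointwise (so
`V⁰ ⊆ ker (1 - T)`), let `d = dim V⁰` and `P = charpoly (1 - T) / X ^ d`.  If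
`V⁰ ≠ ker (1 - T)`, then `P (1 - T) = 0` and `P 0 = 0`; if `V⁰ = ker (1 - T)`, then
`P (1 - T) X = P 0 • π₀ X` for all `X ∈ V`, where `π₀` is the projection onto `V⁰` along
`V^{≠0}`. -/
theorem stmt_15 {V : Type*} [AddCommGroup V] [Module ℂ V] [FiniteDimensional ℂ V]
    (T : Module.End ℂ V) (hT : IsUnit T)
    (hdiag : ⨆ μ : ℂ, T.eigenspace μ = ⊤)
    (V0 Vne : Submodule ℂ V) (hcompl : IsCompl V0 Vne)
    (π0 : V →ₗ[ℂ] V) (hπ1 : ∀ v ∈ V0, π0 v = v) (hπ2 : ∀ v ∈ Vne, π0 v = 0)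
    (hfix : ∀ v ∈ V0, T v = v) (hpres : ∀ v ∈ Vne, T v ∈ Vne)
    (d : ℕ) (hd : d = Module.finrank ℂ V0)
    (P : Polynomial ℂ) (hP : P = LinearMap.charpoly (1 - T) /ₘ Polynomial.X ^ d) :
    (V0 ≠ LinearMap.ker (1 - T) → Polynomial.aeval (1 - T) P = 0 ∧ P.eval 0 = 0) ∧
      (V0 = LinearMap.ker (1 - T) →
        ∀ X : V, (Polynomial.aeval (1 - T) P) X = P.eval 0 • π0 X) :=
  stmt_15_general T V0 Vne hcompl π0 hπ1 hπ2 hfix hpres d hd P hP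
end
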